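/- arXiv:2305.18904 — 2 statements merged into one kernel-verified Lean document; each statement's English description precedes it below -/
import Mathlib

section
/- For every prime number p, the quadratic form x₁² + x₂² + x₃² + x₄² in four variables over the ring ℤ_p of p-adic integers is equivalent (isometric) to the quadratic form −x₁² − x₂² − x₃² − x₄². -/
/-!
If `u = a² + b² + c² + d²` is a unit of a commutative ring, left multiplication by the
quaternion `a + bi + cj + dk` is a linear automorphism of `R⁴` that multiplies the norm form
`x₁² + x₂² + x₃² + x₄²` by `u`. Over `ℤ_[p]`, Hensel's lemma makes `-1` a sum of four squares:
for odd `p` lift a solution of `a² + b² = -1` in `ZMod p`, and for `p = 2` use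
`-1 = √-7 ² + 1 + 1 + 2²`.
-/

open Quaternion

namespace Quaternion

variable {R : Type*} [CommRing R]

lemma isUnit_of_isUnit_normSq {q : ℍ[R]} (h : IsUnit (normSq q)) : IsUnit q := by
  refine ⟨⟨q, ((h.unit⁻¹ : Rˣ) : ℍ[R]) * star q, ?_, ?_⟩, rfl⟩
  · rw [← mul_assoc, ← coe_commutes, mul_assoc, self_mul_star, ← coe_mul, h.val_inv_mul, coe_one]
  · rw [mul_assoc, star_mul_self, ← coe_mul, h.val_inv_mul, coe_one]

variable (R) in
def linearEquivTuple : ℍ[R] ≃ₗ[R] (Fin 4 → R) := QuaternionAlgebra.linearEquivTuple (-1) 0 (-1)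

lemma weightedSumSquares_one_linearEquivTuple (x : ℍ[R]) :
    QuadraticMap.weightedSumSquares R (fun _ : Fin 4 => (1 : R)) (linearEquivTuple R x) =
      normSq x := by
  simp only [normSq_def', QuadraticMap.weightedSumSquares_apply, Fin.sum_univ_four, one_smul, sq]
  rfl

end Quaternion

namespace QuadraticMap

variable {R : Type*} [CommRing R]

lemma weightedSumSquares_const {ι : Type*} [Fintype ι] (u : R) (v : ι → R) :
    weightedSumSquares R (fun _ : ι => u) v =
      u * weightedSumSquares R (fun _ : ι => (1 : R)) v := by
  simp only [weightedSumSquares_apply, Finset.mul_sum, smul_eq_mul, one_mul]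

theorem weightedSumSquares_one_equivalent_of_sum_four_sq
    {u a b c d : R} (hu : IsUnit u) (h : a ^ 2 + b ^ 2 + c ^ 2 + d ^ 2 = u) :
    (weightedSumSquares R (fun _ : Fin 4 => (1 : R))).Equivalent
      (weightedSumSquares R (fun _ : Fin 4 => u)) := by
  let q : ℍ[R] := ⟨a, b, c, d⟩
  have hq : normSq q = u := (normSq_def' q).trans h
  let e := Quaternion.linearEquivTuple R
  let f := e.symm ≪≫ₗ (isUnit_of_isUnit_normSq (hq ▸ hu)).unit.mulLeftLinearEquiv R ℍ[R] ≪≫ₗ e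
  refine Equivalent.symm ⟨{ toLinearEquiv := f, map_app' := fun v => ?_ }⟩
  calc weightedSumSquares R (fun _ => 1) (f v) = normSq (q * e.symm v) :=
        weightedSumSquares_one_linearEquivTuple _
    _ = u * normSq (e.symm v) := by rw [map_mul, hq]
    _ = weightedSumSquares R (fun _ => u) v := by
        rw [weightedSumSquares_const, ← weightedSumSquares_one_linearEquivTuple,
          LinearEquiv.apply_symm_apply]

end QuadraticMap

namespace PadicInt

variable {p : ℕ} [Fact p.Prime]

open Polynomial in
lemma isSquare_of_norm_sq_sub_lt {a c : ℤ_[p]} (h : ‖a ^ 2 - c‖ < ‖2 * a‖ ^ 2) : IsSquare c := by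
  have hF : ‖(X ^ 2 - C c).aeval a‖ < ‖(X ^ 2 - C c).derivative.aeval a‖ ^ 2 := by
    simpa [derivative_pow] using h
  obtain ⟨z, hz, -⟩ := hensels_lemma hF
  exact ⟨z, by simpa [sub_eq_zero, sq, eq_comm] using hz⟩

lemma toZMod_eq_zero_iff_norm_lt_one {x : ℤ_[p]} : toZMod x = 0 ↔ ‖x‖ < 1 := by
  rw [← RingHom.mem_ker, ker_toZMod, IsLocalRing.mem_maximalIdeal, mem_nonunits_iff,
    not_isUnit_iff]

lemma toZMod_ne_zero_iff_norm_eq_one {x : ℤ_[p]} : toZMod x ≠ 0 ↔ ‖x‖ = 1 := by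
  rw [Ne, toZMod_eq_zero_iff_norm_lt_one, not_lt, (norm_le_one x).ge_iff_eq', eq_comm]

lemma isSquare_of_isSquare_toZMod (hp : p ≠ 2) {c : ℤ_[p]} (hc : toZMod c ≠ 0)
    (h : IsSquare (toZMod c)) : IsSquare c := by
  obtain ⟨r, hr⟩ := h
  obtain ⟨a, rfl⟩ := ZMod.ringHom_surjective (toZMod : ℤ_[p] →+* ZMod p) r
  have two_mul_ne_zero : toZMod (2 * a) ≠ 0 := by
    rw [map_mul, map_ofNat]
    refine mul_ne_zero (Ring.two_ne_zero (by rwa [ZMod.ringChar_zmod_n])) fun ha => ?_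
    exact hc (by rw [hr, ha, mul_zero])
  refine isSquare_of_norm_sq_sub_lt (a := a) ?_
  rw [toZMod_ne_zero_iff_norm_eq_one.mp two_mul_ne_zero, one_pow,
    ← toZMod_eq_zero_iff_norm_lt_one, map_sub, hr, map_pow, sq, sub_self]

variable (p) in
lemma exists_sum_four_sq_eq_neg_one :
    ∃ a b c d : ℤ_[p], a ^ 2 + b ^ 2 + c ^ 2 + d ^ 2 = -1 := by
  rcases eq_or_ne p 2 with rfl | hp
  · -- `-7 ≡ 1 [MOD 8]` is a square in `ℤ_[2]`
    obtain ⟨z, hz⟩ : IsSquare (-7 : ℤ_[2]) := by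
      refine isSquare_of_norm_sq_sub_lt (a := 1) ?_
      have h2 : ‖(2 : ℤ_[2])‖ = 2⁻¹ := by exact_mod_cast norm_p (p := 2)
      rw [show (1 : ℤ_[2]) ^ 2 - -7 = 2 ^ 3 by norm_num, mul_one, norm_pow, h2]
      norm_num
    exact ⟨z, 1, 1, 2, by rw [← sq] at hz; rw [← hz]; norm_num⟩
  · obtain ⟨a, b, hab, ha⟩ : ∃ a b : ZMod p, a ^ 2 + b ^ 2 = -1 ∧ a ≠ 0 := by
      obtain ⟨a, b, hab⟩ := ZMod.sq_add_sq p (-1)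
      by_cases ha : a = 0
      · refine ⟨b, a, by rwa [add_comm], fun hb => ?_⟩
        simp [ha, hb] at hab
      · exact ⟨a, b, hab, ha⟩
    obtain ⟨B, rfl⟩ := ZMod.ringHom_surjective (toZMod : ℤ_[p] →+* ZMod p) b
    have hc : toZMod (-1 - B ^ 2) = a ^ 2 := by
      rw [map_sub, map_neg, map_one, map_pow, ← hab, add_sub_cancel_right]
    obtain ⟨z, hz⟩ := isSquare_of_isSquare_toZMod hp (hc ▸ pow_ne_zero 2 ha) (hc ▸ IsSquare.sq a)
    exact ⟨z, B, 0, 0, by rw [← sq] at hz; rw [← hz]; ring⟩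

end PadicInt

theorem sum_four_squares_equiv_neg_sum_four_squares_padicInt (p : ℕ) [Fact p.Prime] :
    (QuadraticMap.weightedSumSquares ℤ_[p] (fun _ : Fin 4 => (1 : ℤ_[p]))).Equivalent
      (QuadraticMap.weightedSumSquares ℤ_[p] (fun _ : Fin 4 => (-1 : ℤ_[p]))) := by
  obtain ⟨a, b, c, d, h⟩ := PadicInt.exists_sum_four_sq_eq_neg_one p
  exact QuadraticMap.weightedSumSquares_one_equivalent_of_sum_four_sq isUnit_one.neg h
end

section
/- For every prime number p, every p-adic integer is a sum of four squares of p-adic integers: for all a ∈ ℤ_p there exist x₁, x₂, x₃, x₄ ∈ ℤ_p with a = x₁² + x₂² + x₃² + x₄². -/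
theorem padicInt_sum_four_squares (p : ℕ) [Fact p.Prime] (a : ℤ_[p]) :
    ∃ x₁ x₂ x₃ x₄ : ℤ_[p], a = x₁ ^ 2 + x₂ ^ 2 + x₃ ^ 2 + x₄ ^ 2 := by
  set f : ℤ_[p] × ℤ_[p] × ℤ_[p] × ℤ_[p] → ℤ_[p] :=
    fun x => x.1 ^ 2 + x.2.1 ^ 2 + x.2.2.1 ^ 2 + x.2.2.2 ^ 2 with hf
  have hcont : Continuous f := by fun_prop
  have hcomp : IsCompact (Set.range f) :=
    Set.image_univ ▸ isCompact_univ.image hcont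
  have hclosed : IsClosed (Set.range f) := hcomp.isClosed
  have hsub : Set.range (Nat.cast : ℕ → ℤ_[p]) ⊆ Set.range f := by
    rintro _ ⟨n, rfl⟩
    obtain ⟨a, b, c, d, h⟩ := Nat.sum_four_squares n
    exact ⟨((a : ℤ_[p]), (b : ℤ_[p]), (c : ℤ_[p]), (d : ℤ_[p])), by
      simp [hf]
      push_cast [← h]
      ring⟩
  have ha : a ∈ Set.range f := by
    have := PadicInt.denseRange_natCast (p := p)
    have : a ∈ closure (Set.range (Nat.cast : ℕ → ℤ_[p])) := this a
    exact hclosed.closure_subset (closure_mono hsub this)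
  obtain ⟨⟨x₁, x₂, x₃, x₄⟩, hx⟩ := ha
  exact ⟨x₁, x₂, x₃, x₄, hx.symm⟩
end
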